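/- arXiv:2002.10063 — 3 statements merged into one kernel-verified Lean document; each statement's English description precedes it below -/
import Mathlib

section
/- Let A = ℂ[y] be the polynomial ring in one variable, N a finitely generated A-module, and τ : N → N an A-linear endomorphism which is stable, i.e. N = Ker(τ) ⊕ Im(τ) and the restriction of τ to Im(τ) is invertible. Then there exists a monic polynomial f ∈ A[x] with f(τ) = 0 whose first (lowest-degree) non-zero coefficient is a unit in A. -/
open Polynomial in
theorem stmt0 (N : Type*) [AddCommGroup N] [Module (Polynomial ℂ) N]
    [Module.Finite (Polynomial ℂ) N]
    (τ : N →ₗ[Polynomial ℂ] N)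
    (hcompl : IsCompl (LinearMap.ker τ) (LinearMap.range τ))
    (hinv : ∀ y ∈ LinearMap.range τ, τ y ∈ LinearMap.range τ)
    (hbij : Function.Bijective (τ.restrict hinv)) :
    ∃ f : Polynomial (Polynomial ℂ), f.Monic ∧
      Polynomial.aeval (τ : Module.End (Polynomial ℂ) N) f = 0 ∧
      IsUnit (f.coeff f.natTrailingDegree) := by
  classical
  set A := Polynomial ℂ
  set τ' : Module.End A (LinearMap.range τ) := τ.restrict hinv with hτ'
  have pow_coe : ∀ (k : ℕ) (m : LinearMap.range τ), (((τ' ^ k) m : LinearMap.range τ) : N)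
      = (τ ^ k) (m : N) := by
    intro k m
    rw [hτ', Module.End.pow_restrict, LinearMap.restrict_coe_apply]
  -- transfer lemma
  have key : ∀ (h : Polynomial A) (m : LinearMap.range τ),
      ((Polynomial.aeval τ' h m : LinearMap.range τ) : N)
        = Polynomial.aeval (τ : Module.End A N) h (m : N) := by
    intro h m
    induction h using Polynomial.induction_on with
    | C a => simp [Polynomial.aeval_C, Module.algebraMap_end_apply]
    | add p q hp hq => simp [map_add, hp, hq]
    | monomial n a ih =>
      simp only [map_mul, Polynomial.aeval_C, Polynomial.aeval_X_pow,
        Module.algebraMap_end_apply, Module.End.mul_apply, LinearMap.smul_apply]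
      rw [Submodule.coe_smul, pow_coe]

  obtain ⟨p, hpm, hp⟩ := LinearMap.exists_monic_and_aeval_eq_zero A τ'
  -- inverse of τ'
  let e : (LinearMap.range τ) ≃ₗ[A] (LinearMap.range τ) := LinearEquiv.ofBijective τ' hbij
  letI : Invertible τ' := ⟨(e.symm : _ →ₗ[A] _), by ext x; simp [e], by ext x; simp [e]⟩
  obtain ⟨q, hqm, hq⟩ := LinearMap.exists_monic_and_aeval_eq_zero A (⅟τ')
  set r := q.reverse with hr
  have refl_key : ∀ f : Polynomial A, f.natDegree ≤ q.natDegree →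
      Polynomial.aeval τ' (Polynomial.reflect q.natDegree f) * (⅟τ') ^ q.natDegree
        = Polynomial.aeval (⅟τ') f := by
    refine Polynomial.induction_with_natDegree_le _ q.natDegree ?_ ?_ ?_
    · simp
    · intro n a _ hne
      rw [Polynomial.reflect_C_mul_X_pow, Polynomial.revAt_le hne]
      simp only [map_mul, Polynomial.aeval_C, Polynomial.aeval_X_pow]
      rw [mul_assoc]
      congr 1
      have hsplit : q.natDegree = (q.natDegree - n) + n := (Nat.sub_add_cancel hne).symm
      calc τ' ^ (q.natDegree - n) * (⅟τ') ^ q.natDegree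
          = τ' ^ (q.natDegree - n) * ((⅟τ') ^ (q.natDegree - n) * (⅟τ') ^ n) := by
            rw [← pow_add, ← hsplit]
        _ = (τ' ^ (q.natDegree - n) * ⅟(τ' ^ (q.natDegree - n))) * (⅟τ') ^ n := by
            rw [invOf_pow, mul_assoc]
        _ = (⅟τ') ^ n := by rw [mul_invOf_self, one_mul]
    · intro f g _ _ hf hg
      simp [map_add, add_mul, hf, hg]
  have hr_ann : Polynomial.aeval τ' r = 0 := by
    have h1 : Polynomial.aeval τ' r * (⅟τ') ^ q.natDegree = 0 := by
      rw [hr, Polynomial.reverse, refl_key q le_rfl, hq]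
    calc Polynomial.aeval τ' r
        = Polynomial.aeval τ' r * ((⅟τ') ^ q.natDegree * τ' ^ q.natDegree) := by
          rw [← invOf_pow, invOf_mul_self, mul_one]
      _ = (Polynomial.aeval τ' r * (⅟τ') ^ q.natDegree) * τ' ^ q.natDegree := by
          rw [mul_assoc]
      _ = 0 := by rw [h1, zero_mul]
  have hr0 : r.coeff 0 = 1 := by
    rw [hr, Polynomial.coeff_zero_reverse, hqm.leadingCoeff]
  set g : Polynomial A := X ^ (r.natDegree + 1) * p + r with hg
  have hgm : g.Monic := by
    apply Polynomial.Monic.add_of_left ((Polynomial.monic_X_pow _).mul hpm)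
    apply lt_of_le_of_lt Polynomial.degree_le_natDegree
    rw [Polynomial.degree_eq_natDegree ((Polynomial.monic_X_pow _).mul hpm).ne_zero]
    exact_mod_cast lt_of_lt_of_le (Nat.lt_succ_self _)
      (by rw [Polynomial.natDegree_mul ((Polynomial.monic_X_pow _).ne_zero) hpm.ne_zero,
            Polynomial.natDegree_X_pow]; omega)
  have hg0 : g.coeff 0 = 1 := by
    rw [hg, Polynomial.coeff_add, Polynomial.mul_coeff_zero, Polynomial.coeff_X_pow]
    simp [hr0]
  have hg_ann : Polynomial.aeval τ' g = 0 := by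
    rw [hg, map_add, map_mul, hp, hr_ann, mul_zero, zero_add]
  refine ⟨X * g, Polynomial.monic_X.mul hgm, ?_, ?_⟩
  · ext n
    obtain ⟨x, hx, y, hy, rfl⟩ := Submodule.mem_sup.mp
      (by rw [hcompl.sup_eq_top]; trivial :
        n ∈ LinearMap.ker τ ⊔ LinearMap.range τ)
    rw [LinearMap.zero_apply, map_add]
    have h1 : Polynomial.aeval (τ : Module.End A N) (X * g) x = 0 := by
      rw [mul_comm, map_mul, Polynomial.aeval_X, Module.End.mul_apply]
      rw [LinearMap.mem_ker.mp hx, map_zero]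
    have h2 : Polynomial.aeval (τ : Module.End A N) (X * g) y = 0 := by
      rw [← key (X * g) ⟨y, hy⟩, map_mul, hg_ann, mul_zero]
      simp
    rw [h1, h2, add_zero]
  · have hfg : (X * g).coeff ((X * g).natTrailingDegree) = (X * g).trailingCoeff := rfl
    have hX : (X : Polynomial A).trailingCoeff = 1 := by
      rw [Polynomial.trailingCoeff, Polynomial.natTrailingDegree_X, Polynomial.coeff_X_one]
    rw [hfg, Polynomial.trailingCoeff_mul, hX, one_mul]
    have : g.natTrailingDegree = 0 :=
      Polynomial.natTrailingDegree_eq_zero.mpr (Or.inr (by rw [hg0]; exact one_ne_zero))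
    rw [Polynomial.trailingCoeff, this, hg0]
    exact isUnit_one
end

section
/- Let A be a commutative Noetherian ring, f ∈ A, and C a finitely generated A-module with no f-torsion (i.e. multiplication by f is injective on C). Then the f-adic completion C^∧_f has no f-torsion. -/
/-! An element `c` of the `f`-adic completion is a compatible sequence of classes `cₙ ∈ M/fⁿM`.
If `f • c = 0`, lift `cₙ₊₁` to `x ∈ M`; then `f • x ∈ fⁿ⁺¹M`, and since `f` is a nonzerodivisor
on `M` this forces `x ∈ fⁿM`, so `cₙ`, the image of `x`, vanishes. Thus `f`, and with it every
power of `f`, is a nonzerodivisor on the completion. -/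

section

open Submodule

variable {A M : Type*} [CommRing A] [AddCommGroup M] [Module A M]

theorem mem_span_singleton_pow_smul_top_iff (f : A) (n : ℕ) (x : M) :
    x ∈ (Ideal.span {f} ^ n • ⊤ : Submodule A M) ↔ ∃ y : M, f ^ n • y = x := by
  rw [Ideal.span_singleton_pow, ideal_span_singleton_smul, mem_smul_pointwise_iff_exists]
  simp only [mem_top, true_and]

theorem IsSMulRegular.mem_span_singleton_pow_smul_top_of_smul_mem {f : A}
    (hf : IsSMulRegular M f) {n : ℕ} {x : M}
    (hx : f • x ∈ (Ideal.span {f} ^ (n + 1) • ⊤ : Submodule A M)) :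
    x ∈ (Ideal.span {f} ^ n • ⊤ : Submodule A M) := by
  obtain ⟨y, hy⟩ := (mem_span_singleton_pow_smul_top_iff f (n + 1) (f • x)).1 hx
  refine (mem_span_singleton_pow_smul_top_iff f n x).2 ⟨y, hf ?_⟩
  change f • f ^ n • y = f • x
  rw [← hy, pow_succ', mul_smul]

theorem AdicCompletion.isSMulRegular_of_isSMulRegular {f : A} (hf : IsSMulRegular M f) :
    IsSMulRegular (AdicCompletion (Ideal.span {f}) M) f := by
  refine IsSMulRegular.of_right_eq_zero_of_smul fun c hc => AdicCompletion.ext fun n => ?_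
  obtain ⟨x, hx⟩ := mkQ_surjective _ (c.val (n + 1))
  have hfx : f • x ∈ (Ideal.span {f} ^ (n + 1) • ⊤ : Submodule A M) := by
    rw [← Quotient.mk_eq_zero, Quotient.mk_smul]
    simpa [AdicCompletion.val_smul_apply, ← hx] using congrArg (fun c => c.val (n + 1)) hc
  rw [← transitionMap_comp_eval_apply _ _ n.le_succ c, ← hx]
  simpa using hf.mem_span_singleton_pow_smul_top_of_smul_mem hfx

end

theorem stmt6_general (A : Type*) [CommRing A]
    (C : Type*) [AddCommGroup C] [Module A C] (f : A)
    (hC : ∀ c : C, f • c = 0 → c = 0) :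
    ∀ c : AdicCompletion (Ideal.span {f}) C, (∃ k : ℕ, 1 ≤ k ∧ f ^ k • c = 0) → c = 0 := by
  rintro c ⟨k, -, hc⟩
  have hf := AdicCompletion.isSMulRegular_of_isSMulRegular (.of_right_eq_zero_of_smul hC)
  exact (hf.pow k).right_eq_zero_of_smul hc

theorem stmt6 (A : Type*) [CommRing A] [IsNoetherianRing A]
    (C : Type*) [AddCommGroup C] [Module A C] [Module.Finite A C] (f : A)
    (hC : ∀ c : C, f • c = 0 → c = 0) :
    ∀ c : AdicCompletion (Ideal.span {f}) C, (∃ k : ℕ, 1 ≤ k ∧ f ^ k • c = 0) → c = 0 :=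
  stmt6_general A C f hC
end

section
/- Let A be a finitely generated ℂ-algebra (in particular a Noetherian commutative ring) and M a finitely generated A-module. Then the canonical map M → lim_{I cofinite} M/IM, where the limit is over all cofinite ideals I ⊂ A, is injective. -/
/-- Zariski's lemma: quotient of a finite type ℂ-algebra by a maximal ideal is
finite dimensional over ℂ. -/
lemma aux_quot_max_findim (A : Type*) [CommRing A] [Algebra ℂ A] [Algebra.FiniteType ℂ A]
    (𝔪 : Ideal A) [𝔪.IsMaximal] : FiniteDimensional ℂ (A ⧸ 𝔪) := by
  letI : Field (A ⧸ 𝔪) := Ideal.Quotient.field 𝔪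
  exact finite_of_finite_type_of_isJacobsonRing ℂ (A ⧸ 𝔪)

/-- Quotients by powers of maximal ideals are finite dimensional. -/
lemma aux_quot_pow_findim (A : Type*) [CommRing A] [Algebra ℂ A] [Algebra.FiniteType ℂ A]
    (𝔪 : Ideal A) [𝔪.IsMaximal] (n : ℕ) : FiniteDimensional ℂ (A ⧸ 𝔪 ^ (n + 1)) := by
  haveI : FiniteDimensional ℂ (A ⧸ 𝔪) := aux_quot_max_findim A 𝔪
  haveI : Algebra.IsIntegral ℂ (A ⧸ 𝔪 ^ (n + 1)) := by
    constructor
    intro x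
    obtain ⟨a, rfl⟩ := Ideal.Quotient.mk_surjective x
    -- the image of a in A ⧸ 𝔪 is integral over ℂ
    have hy : IsIntegral ℂ (Ideal.Quotient.mk 𝔪 a) := Algebra.IsIntegral.isIntegral _
    obtain ⟨p, hp, hpa⟩ := hy
    refine ⟨p ^ (n + 1), hp.pow _, ?_⟩
    have h1 : Polynomial.aeval a p ∈ 𝔪 := by
      have h0 : Ideal.Quotient.mkₐ ℂ 𝔪 (Polynomial.aeval a p) = 0 := by
        rw [← Polynomial.aeval_algHom_apply]
        exact hpa
      rwa [Ideal.Quotient.mkₐ_eq_mk, Ideal.Quotient.eq_zero_iff_mem] at h0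
    have h2 : (Polynomial.aeval a p) ^ (n + 1) ∈ 𝔪 ^ (n + 1) :=
      Ideal.pow_mem_pow h1 _
    show Polynomial.eval₂ _ _ _ = 0
    rw [← Polynomial.aeval_def, map_pow]
    have h3 := Polynomial.aeval_algHom_apply (Ideal.Quotient.mkₐ ℂ (𝔪 ^ (n + 1))) a p
    rw [Ideal.Quotient.mkₐ_eq_mk] at h3
    rw [h3, ← map_pow, Ideal.Quotient.eq_zero_iff_mem]
    exact h2
  exact Algebra.IsIntegral.finite

theorem stmt8 (A : Type*) [CommRing A] [Algebra ℂ A] [Algebra.FiniteType ℂ A]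
    (M : Type*) [AddCommGroup M] [Module A M] [Module.Finite A M] (m : M)
    (h : ∀ I : Ideal A, FiniteDimensional ℂ (A ⧸ I) → m ∈ I • (⊤ : Submodule A M)) :
    m = 0 := by
  by_contra hm
  haveI : IsNoetherianRing A := Algebra.FiniteType.isNoetherianRing ℂ A
  -- annihilator of m
  let J : Ideal A := LinearMap.ker (LinearMap.toSpanSingleton A M m)
  have hJ : J ≠ ⊤ := by
    intro hJt
    have h1 : (1 : A) ∈ J := hJt ▸ Submodule.mem_top
    simp only [J, LinearMap.mem_ker, LinearMap.toSpanSingleton_apply, one_smul] at h1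
    exact hm h1
  obtain ⟨𝔪, h𝔪, hle⟩ := Ideal.exists_le_maximal J hJ
  haveI := h𝔪
  have hmem : m ∈ (⨅ i : ℕ, 𝔪 ^ i • ⊤ : Submodule A M) := by
    rw [Submodule.mem_iInf]
    intro i
    cases i with
    | zero => simp
    | succ n =>
      haveI := aux_quot_pow_findim A 𝔪 n
      exact h (𝔪 ^ (n + 1)) ‹_›
  -- transfer to a module in the same universe as A
  obtain ⟨n, π, hπ⟩ := Module.Finite.exists_fin' A M
  let e : ((Fin n → A) ⧸ LinearMap.ker π) ≃ₗ[A] M := π.quotKerEquivOfSurjective hπ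
  have hmap : ∀ i : ℕ, Submodule.map (e.symm.toLinearMap)
      ((𝔪 ^ i • ⊤ : Submodule A M)) = (𝔪 ^ i • ⊤ : Submodule A ((Fin n → A) ⧸ LinearMap.ker π)) := by
    intro i
    rw [Submodule.map_smul'', Submodule.map_top, LinearEquiv.range]
  have hmem' : e.symm m ∈ (⨅ i : ℕ, 𝔪 ^ i • ⊤ :
      Submodule A ((Fin n → A) ⧸ LinearMap.ker π)) := by
    rw [Submodule.mem_iInf]
    intro i
    rw [← hmap i]
    exact Submodule.mem_map_of_mem ((Submodule.mem_iInf _).mp hmem i)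
  obtain ⟨r, hr'⟩ := (Ideal.mem_iInf_smul_pow_eq_bot_iff 𝔪 (e.symm m)).mp hmem'
  have hr : (r : A) • m = m := by
    have := congrArg e hr'
    rwa [map_smul, LinearEquiv.apply_symm_apply] at this
  have hone : (1 : A) - (r : A) ∈ J := by
    simp only [J, LinearMap.mem_ker, LinearMap.toSpanSingleton_apply, sub_smul, one_smul, hr,
      sub_self]
  have : (1 : A) ∈ 𝔪 := by
    have := 𝔪.add_mem (hle hone) r.2
    simpa using this
  exact h𝔪.ne_top ((Ideal.eq_top_iff_one _).mpr this)
end
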